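/- arXiv:1106.5350 — 3 statements merged into one kernel-verified Lean document; each statement's English description precedes it below -/
import Mathlib

section
/- Let P, Q ∈ ℂ^{d×d} with Q invertible, J₁ = 0, and suppose Ω₁, Ω₂ ∈ ℂ^{d×d} satisfy P Ω_k² + Q = 0 for k = 1,2 and det(exp(i(b−a)Ω₂) − exp(i(b−a)Ω₁)) ≠ 0. Then for all d_a, d_b ∈ ℂ^d there exist unique vectors z₁, z₂ ∈ ℂ^d such that the function z(t) = exp(i(t−a)Ω₁)z₁ + exp(i(t−a)Ω₂)z₂ − Q⁻¹J₃ satisfies z(a) = d_a and z(b) = d_b. -/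
open Matrix

/-- Matrix exponential, defined by its power series. -/
noncomputable def mexp {d : ℕ} (A : Matrix (Fin d) (Fin d) ℂ) : Matrix (Fin d) (Fin d) ℂ :=
  ∑' n : ℕ, ((n.factorial : ℂ))⁻¹ • A ^ n

lemma mexp_zero {d : ℕ} : mexp (0 : Matrix (Fin d) (Fin d) ℂ) = 1 := by
  unfold mexp
  rw [tsum_eq_single 0]
  · simp
  · intro n hn
    simp [zero_pow hn]

theorem stmt3 (d : ℕ) (a b : ℝ) (hab : a < b)
    (P Q Ω₁ Ω₂ : Matrix (Fin d) (Fin d) ℂ) (J₃ : Fin d → ℂ)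
    (hQ : IsUnit Q.det)
    (h1 : P * Ω₁ ^ 2 + Q = 0) (h2 : P * Ω₂ ^ 2 + Q = 0)
    (hdet : (mexp ((Complex.I * ((b : ℂ) - (a : ℂ))) • Ω₂)
              - mexp ((Complex.I * ((b : ℂ) - (a : ℂ))) • Ω₁)).det ≠ 0)
    (d_a d_b : Fin d → ℂ) :
    ∃! p : (Fin d → ℂ) × (Fin d → ℂ),
      (fun t : ℝ => (mexp ((Complex.I * ((t : ℂ) - (a : ℂ))) • Ω₁)).mulVec p.1
          + (mexp ((Complex.I * ((t : ℂ) - (a : ℂ))) • Ω₂)).mulVec p.2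
          - Q⁻¹.mulVec J₃) a = d_a
      ∧ (fun t : ℝ => (mexp ((Complex.I * ((t : ℂ) - (a : ℂ))) • Ω₁)).mulVec p.1
          + (mexp ((Complex.I * ((t : ℂ) - (a : ℂ))) • Ω₂)).mulVec p.2
          - Q⁻¹.mulVec J₃) b = d_b := by
  set E₁ := mexp ((Complex.I * ((b : ℂ) - (a : ℂ))) • Ω₁) with hE1
  set E₂ := mexp ((Complex.I * ((b : ℂ) - (a : ℂ))) • Ω₂) with hE2
  set M := E₂ - E₁ with hM
  have hMunit : IsUnit M.det := isUnit_iff_ne_zero.mpr hdet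
  have hMinv : M * M⁻¹ = 1 := Matrix.mul_nonsing_inv M hMunit
  have hMinv' : M⁻¹ * M = 1 := Matrix.nonsing_inv_mul M hMunit
  set c₁ := d_a + Q⁻¹.mulVec J₃ with hc1
  set c₂ := d_b + Q⁻¹.mulVec J₃ with hc2
  have haa : (Complex.I * ((a : ℂ) - (a : ℂ))) = 0 := by ring
  -- the function at t = a is z₁ + z₂ - Q⁻¹J₃
  have keyA : ∀ z₁ z₂ : Fin d → ℂ,
      (mexp ((Complex.I * ((a : ℂ) - (a : ℂ))) • Ω₁)).mulVec z₁
        + (mexp ((Complex.I * ((a : ℂ) - (a : ℂ))) • Ω₂)).mulVec z₂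
        - Q⁻¹.mulVec J₃ = z₁ + z₂ - Q⁻¹.mulVec J₃ := by
    intro z₁ z₂
    rw [haa, zero_smul, zero_smul, mexp_zero, Matrix.one_mulVec, Matrix.one_mulVec]
  -- characterize the two conditions as a linear system
  have equiv : ∀ z₁ z₂ : Fin d → ℂ,
      (z₁ + z₂ - Q⁻¹.mulVec J₃ = d_a ∧ E₁.mulVec z₁ + E₂.mulVec z₂ - Q⁻¹.mulVec J₃ = d_b)
      ↔ (z₁ + z₂ = c₁ ∧ E₁.mulVec z₁ + E₂.mulVec z₂ = c₂) := by
    intro z₁ z₂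
    constructor
    · rintro ⟨h₁, h₂⟩
      constructor
      · rw [hc1, ← h₁]; abel
      · rw [hc2, ← h₂]; abel
    · rintro ⟨h₁, h₂⟩
      constructor
      · rw [h₁, hc1]; abel
      · rw [h₂, hc2]; abel
  refine ⟨(c₁ - M⁻¹.mulVec (c₂ - E₁.mulVec c₁), M⁻¹.mulVec (c₂ - E₁.mulVec c₁)), ?_, ?_⟩
  · simp only
    rw [keyA]
    rw [equiv]
    constructor
    · abel
    · have : E₂.mulVec (M⁻¹.mulVec (c₂ - E₁.mulVec c₁))
          = M.mulVec (M⁻¹.mulVec (c₂ - E₁.mulVec c₁))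
            + E₁.mulVec (M⁻¹.mulVec (c₂ - E₁.mulVec c₁)) := by
        rw [hM, Matrix.sub_mulVec]; abel
      rw [this, Matrix.mulVec_mulVec, hMinv, Matrix.one_mulVec,
        Matrix.mulVec_sub, Matrix.mulVec_add, Matrix.mulVec_sub]
      abel
  · rintro ⟨z₁, z₂⟩ ⟨h₁, h₂⟩
    simp only at h₁ h₂
    rw [keyA] at h₁
    have hsys := (equiv z₁ z₂).mp ⟨h₁, h₂⟩
    obtain ⟨hs1, hs2⟩ := hsys
    have hz1 : z₁ = c₁ - z₂ := by rw [← hs1]; abel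
    have hMz2 : M.mulVec z₂ = c₂ - E₁.mulVec c₁ := by
      rw [hM, Matrix.sub_mulVec, ← hs2, hz1, Matrix.mulVec_sub]
      abel
    have hz2 : z₂ = M⁻¹.mulVec (c₂ - E₁.mulVec c₁) := by
      rw [← hMz2, Matrix.mulVec_mulVec, hMinv', Matrix.one_mulVec]
    rw [Prod.mk.injEq]
    exact ⟨by rw [hz1, hz2], hz2⟩
end

section
/- Let φ(ε,ζ) be an analytic function of two complex variables on a polydisc around (0,0) with φ(0,0) = 0, and let g be a continuous complex function on a punctured disc around 0 satisfying |g(ε) − τ/ε| ≤ C for some τ ∈ ℂ* and C > 0. Then for every entire function ψ: ℂ → ℂ, the matrix-valued functions ψ(g(ε)·φ(ε, εΩ)) converge, as ε → 0, to ψ(τ ∂φ/∂ε(0,0) I_d + τ ∂φ/∂ζ(0,0) Ω), uniformly for Ω in any compact subset of ℂ^{d×d}. -/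
open Matrix Filter Topology

/-- `Phi a d ε Ω = φ(ε, εΩ)` where `φ(ε,ζ) = ∑ a i j ε^i ζ^j` is a two-variable
power series: substitution of `εΩ` in the second variable. -/
noncomputable def Phi (a : ℕ → ℕ → ℂ) (d : ℕ) (ε : ℂ) (Ω : Matrix (Fin d) (Fin d) ℂ) :
    Matrix (Fin d) (Fin d) ℂ :=
  ∑' p : ℕ × ℕ, (a p.1 p.2 * ε ^ p.1) • (ε • Ω) ^ p.2

/-- Entire functional calculus: `ψ` applied to a matrix via the power series of `ψ` at 0. -/
noncomputable def psiMat (ψ : ℂ → ℂ) {d : ℕ} (M : Matrix (Fin d) (Fin d) ℂ) :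
    Matrix (Fin d) (Fin d) ℂ :=
  ∑' n : ℕ, (iteratedDeriv n ψ 0 / (n.factorial : ℂ)) • M ^ n

/-! Up to `O(ε²)`, uniformly for `Ω` in a bounded set, the series gives
`φ(ε, εΩ) = ε (a₁₀ + a₀₁ Ω)`, while `g(ε) ε = τ + O(ε)`; hence the argument `g(ε) φ(ε, εΩ)` of `ψ`
converges uniformly on `K` to `τ (a₁₀ + a₀₁ Ω)`. The entire functional calculus is a power series
of infinite radius, hence continuous, and the matrix algebra is proper, so `ψ` is uniformly
continuous on a compact neighbourhood of the limit's image, which carries the uniform convergence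
through `ψ`. -/

open FormalMultilinearSeries

section UniformConvergence

variable {ι α β : Type*} [PseudoMetricSpace β] {p : Filter ι} {s : Set α}
  {F : ι → α → β} {f : α → β}

theorem tendstoUniformlyOn_of_dist_le {b : ι → ℝ}
    (hFf : ∀ᶠ i in p, ∀ x ∈ s, dist (f x) (F i x) ≤ b i) (hb : Tendsto b p (𝓝 0)) :
    TendstoUniformlyOn F f p s := by
  refine Metric.tendstoUniformlyOn_iff.mpr fun η hη => ?_
  filter_upwards [hFf, hb.eventually (gt_mem_nhds hη)] with i hi hbi x hx
  exact (hi x hx).trans_lt hbi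

theorem Continuous.comp_tendstoUniformlyOn_of_isBounded {γ : Type*} [ProperSpace β]
    [UniformSpace γ] {g : β → γ} (hg : Continuous g) (hf : Bornology.IsBounded (f '' s))
    (h : TendstoUniformlyOn F f p s) :
    TendstoUniformlyOn (fun i x => g (F i x)) (fun x => g (f x)) p s := by
  have ht : IsCompact (Metric.cthickening 1 (f '' s)) :=
    Metric.isCompact_of_isClosed_isBounded Metric.isClosed_cthickening hf.cthickening
  refine (ht.uniformContinuousOn_of_continuous hg.continuousOn).comp_tendstoUniformlyOn_eventually
    ?_ (fun x hx => Metric.self_subset_cthickening _ (Set.mem_image_of_mem f hx)) h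
  filter_upwards [Metric.tendstoUniformlyOn_iff.mp h 1 one_pos] with i hi x hx
  exact Metric.mem_cthickening_of_dist_le _ _ _ _ (Set.mem_image_of_mem f hx)
    (by rw [dist_comm]; exact (hi x hx).le)

end UniformConvergence

theorem tendsto_mul_of_norm_sub_div_le {g : ℂ → ℂ} {δ C : ℝ} {τ : ℂ} (hδ : 0 < δ)
    (hgb : ∀ ε ∈ Metric.ball (0 : ℂ) δ \ {0}, ‖g ε - τ / ε‖ ≤ C) :
    Tendsto (fun ε => g ε * ε) (𝓝[≠] 0) (𝓝 τ) := by
  rw [tendsto_iff_norm_sub_tendsto_zero]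
  have hball : Metric.ball (0 : ℂ) δ \ {0} ∈ 𝓝[≠] (0 : ℂ) :=
    sdiff_mem_nhdsWithin_compl (Metric.ball_mem_nhds 0 hδ) {0}
  have hlim : Tendsto (fun ε : ℂ => C * ‖ε‖) (𝓝[≠] 0) (𝓝 0) := by
    simpa using (tendsto_norm_zero.mono_left nhdsWithin_le_nhds).const_mul C
  refine squeeze_zero' (Eventually.of_forall fun _ => norm_nonneg _) ?_ hlim
  filter_upwards [hball] with ε hε
  have hε0 : ε ≠ 0 := hε.2
  calc ‖g ε * ε - τ‖ = ‖g ε - τ / ε‖ * ‖ε‖ := by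
        rw [← norm_mul, sub_mul, div_mul_cancel₀ τ hε0]
    _ ≤ C * ‖ε‖ := mul_le_mul_of_nonneg_right (hgb ε hε) (norm_nonneg ε)

section EntireCalculus

noncomputable def taylorCoeff (ψ : ℂ → ℂ) (n : ℕ) : ℂ :=
  iteratedDeriv n ψ 0 / n.factorial

theorem summable_norm_taylorCoeff_mul_pow {ψ : ℂ → ℂ} (hψ : Differentiable ℂ ψ) (r : NNReal) :
    Summable fun n => ‖taylorCoeff ψ n‖ * (r : ℝ) ^ n := by
  have h := (Complex.hasSum_taylorSeries_of_entire hψ 0 r).summable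
  rw [← summable_norm_iff] at h
  refine h.congr fun n => ?_
  simp [taylorCoeff]
  ring

variable {A : Type*} [NormedRing A] [NormedAlgebra ℂ A] [NormOneClass A] {ψ : ℂ → ℂ}

theorem radius_ofScalars_taylorCoeff (hψ : Differentiable ℂ ψ) :
    (ofScalars A (taylorCoeff ψ)).radius = ⊤ :=
  radius_eq_top_of_summable_norm _ fun r => by
    simpa only [ofScalars_norm] using summable_norm_taylorCoeff_mul_pow hψ r

theorem continuous_ofScalarsSum_taylorCoeff [CompleteSpace A] (hψ : Differentiable ℂ ψ) :
    Continuous (ofScalarsSum (E := A) (taylorCoeff ψ)) := by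
  have hr := radius_ofScalars_taylorCoeff (A := A) hψ
  have h := ((ofScalars A (taylorCoeff ψ)).hasFPowerSeriesOnBall (by simp [hr])).continuousOn
  rw [hr, Metric.eball_top] at h
  exact continuousOn_univ.mp h

end EntireCalculus

section PhiSeries

noncomputable def phiSeries {A : Type*} [NormedRing A] [NormedAlgebra ℂ A] (a : ℕ → ℕ → ℂ)
    (ε : ℂ) (x : A) : A :=
  ∑' p : ℕ × ℕ, (a p.1 p.2 * ε ^ p.1) • (ε • x) ^ p.2

variable {A : Type*} [NormedRing A] [NormedAlgebra ℂ A] [NormOneClass A] {a : ℕ → ℕ → ℂ}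

theorem norm_phiSeries_term_le {ρ B : ℝ} (hρ : 0 < ρ) (ε : ℂ) {x : A} (hx : ‖x‖ ≤ B)
    (i j : ℕ) :
    ‖(a i j * ε ^ i) • (ε • x) ^ j‖ ≤ (‖ε‖ / ρ) ^ (i + j) * (‖a i j‖ * ρ ^ i * (ρ * B) ^ j) := by
  calc ‖(a i j * ε ^ i) • (ε • x) ^ j‖ ≤ ‖a i j‖ * ‖ε‖ ^ i * ‖ε • x‖ ^ j := by
        rw [norm_smul, norm_mul, norm_pow]
        gcongr
        exact norm_pow_le _ _
    _ ≤ ‖a i j‖ * ‖ε‖ ^ i * (‖ε‖ * B) ^ j := by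
        rw [norm_smul]
        gcongr
    _ = (‖ε‖ / ρ) ^ (i + j) * (‖a i j‖ * ρ ^ i * (ρ * B) ^ j) := by
        rw [div_pow, pow_add, mul_pow, mul_pow]
        field_simp
        ring

theorem norm_phiSeries_sub_le [CompleteSpace A] (h00 : a 0 0 = 0) {ρ B : ℝ} (hρ : 0 < ρ)
    (hsum : Summable fun p : ℕ × ℕ => ‖a p.1 p.2‖ * ρ ^ p.1 * (ρ * B) ^ p.2)
    {ε : ℂ} (hε : ‖ε‖ ≤ ρ) {x : A} (hx : ‖x‖ ≤ B) :
    ‖phiSeries a ε x - ε • (a 1 0 • 1 + a 0 1 • x)‖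
      ≤ (‖ε‖ / ρ) ^ 2 * ∑' p : ℕ × ℕ, ‖a p.1 p.2‖ * ρ ^ p.1 * (ρ * B) ^ p.2 := by
  set m : ℕ × ℕ → ℝ := fun p => ‖a p.1 p.2‖ * ρ ^ p.1 * (ρ * B) ^ p.2
  set f : ℕ × ℕ → A := fun p => (a p.1 p.2 * ε ^ p.1) • (ε • x) ^ p.2
  have hB : 0 ≤ B := (norm_nonneg x).trans hx
  have hq0 : 0 ≤ ‖ε‖ / ρ := by positivity
  have hq1 : ‖ε‖ / ρ ≤ 1 := div_le_one_of_le₀ hε hρ.le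
  have hm0 : ∀ p, 0 ≤ m p := fun p => by positivity
  have hf : ∀ p, ‖f p‖ ≤ (‖ε‖ / ρ) ^ (p.1 + p.2) * m p :=
    fun p => norm_phiSeries_term_le hρ ε hx p.1 p.2
  have hfm : ∀ p, ‖f p‖ ≤ m p :=
    fun p => (hf p).trans (mul_le_of_le_one_left (hm0 p) (pow_le_one₀ hq0 hq1))
  let T : Finset (ℕ × ℕ) := {(0, 0), (1, 0), (0, 1)}
  have hT : ∑ p ∈ T, f p = ε • (a 1 0 • 1 + a 0 1 • x) := by
    rw [Finset.sum_insert (by decide), Finset.sum_insert (by decide), Finset.sum_singleton]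
    simp only [f, h00, zero_smul, pow_zero, pow_one, mul_one, zero_add]
    module
  have htail : ∀ p : {p // p ∉ T}, ‖f p‖ ≤ (‖ε‖ / ρ) ^ 2 * m p := by
    rintro ⟨⟨i, j⟩, hij⟩
    have h2 : 2 ≤ i + j := by
      simp only [T, Finset.mem_insert, Finset.mem_singleton, Prod.mk.injEq, not_or] at hij
      omega
    exact (hf _).trans (mul_le_mul_of_nonneg_right (pow_le_pow_of_le_one hq0 hq1 h2) (hm0 _))
  calc ‖phiSeries a ε x - ε • (a 1 0 • 1 + a 0 1 • x)‖ = ‖∑' p : {p // p ∉ T}, f p‖ := by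
        rw [phiSeries, ← (hsum.of_norm_bounded hfm).sum_add_tsum_subtype_compl T, hT,
          add_sub_cancel_left]
    _ ≤ ∑' p : {p // p ∉ T}, (‖ε‖ / ρ) ^ 2 * m p :=
        tsum_of_norm_bounded ((hsum.mul_left _).subtype _).hasSum htail
    _ ≤ (‖ε‖ / ρ) ^ 2 * ∑' p, m p := by
        rw [tsum_mul_left]
        exact mul_le_mul_of_nonneg_left (hsum.tsum_subtype_le _ _ hm0) (by positivity)

theorem tendstoUniformlyOn_smul_phiSeries [CompleteSpace A] (h00 : a 0 0 = 0) {r : ℝ} (hr : 0 < r)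
    (hconv : ∀ s t : ℝ, 0 ≤ s → 0 ≤ t → s + t < r →
      Summable (fun p : ℕ × ℕ => ‖a p.1 p.2‖ * s ^ p.1 * t ^ p.2))
    {g : ℂ → ℂ} {τ : ℂ} (hg : Tendsto (fun ε => g ε * ε) (𝓝[≠] 0) (𝓝 τ))
    {K : Set A} (hK : Bornology.IsBounded K) :
    TendstoUniformlyOn (fun ε x => g ε • phiSeries a ε x)
      (fun x => (τ * a 1 0) • (1 : A) + (τ * a 0 1) • x) (𝓝[≠] 0) K := by
  obtain ⟨B, hB, hKB⟩ := hK.exists_pos_norm_le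
  set ρ := r / (2 * (1 + B))
  have hρ : 0 < ρ := by positivity
  have hsum := hconv ρ (ρ * B) hρ.le (by positivity) (by
    have : ρ * (1 + B) = r / 2 := by simp only [ρ]; field_simp
    linarith)
  set S := ∑' p : ℕ × ℕ, ‖a p.1 p.2‖ * ρ ^ p.1 * (ρ * B) ^ p.2
  set M := ‖a 1 0‖ + ‖a 0 1‖ * B
  have hL : ∀ x ∈ K, ‖a 1 0 • (1 : A) + a 0 1 • x‖ ≤ M := fun x hx => by
    refine (norm_add_le _ _).trans ?_
    rw [norm_smul, norm_smul, norm_one, mul_one]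
    simp only [M]
    gcongr
    exact hKB x hx
  refine tendstoUniformlyOn_of_dist_le
    (b := fun ε => ‖g ε * ε‖ * (‖ε‖ * (S / ρ ^ 2)) + ‖g ε * ε - τ‖ * M) ?_ ?_
  · filter_upwards [nhdsWithin_le_nhds (Metric.closedBall_mem_nhds (0 : ℂ) hρ)] with ε hερ x hx
    have hrem := norm_phiSeries_sub_le h00 hρ hsum (mem_closedBall_zero_iff.mp hερ) (hKB x hx)
    rw [dist_eq_norm']
    calc ‖g ε • phiSeries a ε x - ((τ * a 1 0) • 1 + (τ * a 0 1) • x)‖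
        = ‖g ε • (phiSeries a ε x - ε • (a 1 0 • 1 + a 0 1 • x))
            + (g ε * ε - τ) • (a 1 0 • 1 + a 0 1 • x)‖ := by
          congr 1
          module
      _ ≤ ‖g ε‖ * ((‖ε‖ / ρ) ^ 2 * S) + ‖g ε * ε - τ‖ * M := by
          refine (norm_add_le _ _).trans (add_le_add ?_ ?_) <;> rw [norm_smul] <;> gcongr
          exact hL x hx
      _ = ‖g ε * ε‖ * (‖ε‖ * (S / ρ ^ 2)) + ‖g ε * ε - τ‖ * M := by
          rw [norm_mul]
          field_simp
  · have hb : Tendsto (fun ε => ‖g ε * ε‖ * (‖ε‖ * (S / ρ ^ 2)) + ‖g ε * ε - τ‖ * M) (𝓝[≠] 0)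
        (𝓝 (‖τ‖ * (0 * (S / ρ ^ 2)) + 0 * M)) :=
      (hg.norm.mul ((tendsto_norm_zero.mono_left nhdsWithin_le_nhds).mul_const _)).add
        ((tendsto_iff_norm_sub_tendsto_zero.mp hg).mul_const M)
    simpa using hb

end PhiSeries

theorem stmt7_general (d : ℕ) (a : ℕ → ℕ → ℂ) (h00 : a 0 0 = 0)
    (r : ℝ) (hr : 0 < r)
    (hconv : ∀ s t : ℝ, 0 ≤ s → 0 ≤ t → s + t < r →
      Summable (fun p : ℕ × ℕ => ‖a p.1 p.2‖ * s ^ p.1 * t ^ p.2))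
    (g : ℂ → ℂ) (δ C : ℝ) (hδ : 0 < δ)
    (τ : ℂ)
    (hgb : ∀ ε ∈ Metric.ball (0 : ℂ) δ \ {0}, ‖g ε - τ / ε‖ ≤ C)
    (ψ : ℂ → ℂ) (hψ : ∀ z : ℂ, AnalyticAt ℂ ψ z)
    (K : Set (Matrix (Fin d) (Fin d) ℂ)) (hK : IsCompact K) :
    TendstoUniformlyOn
      (fun (ε : ℂ) (Ω : Matrix (Fin d) (Fin d) ℂ) => psiMat ψ (g ε • Phi a d ε Ω))
      (fun Ω : Matrix (Fin d) (Fin d) ℂ =>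
        psiMat ψ ((τ * a 1 0) • (1 : Matrix (Fin d) (Fin d) ℂ) + (τ * a 0 1) • Ω))
      (𝓝[≠] (0 : ℂ)) K := by
  -- For `d = 0` the matrices form the zero ring, on which no norm has `‖1‖ = 1`.
  rcases isEmpty_or_nonempty (Fin d) with hd | hd
  · refine fun u hu => Eventually.of_forall fun ε Ω _ => ?_
    convert refl_mem_uniformity hu (x := psiMat ψ (g ε • Phi a d ε Ω)) using 3
    exact Matrix.ext fun i => isEmptyElim i
  -- Any submultiplicative norm will do; it induces the product uniformity of the statement.
  let _ := Matrix.linftyOpNormedRing (n := Fin d) (α := ℂ)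
  let _ := Matrix.linftyOpNormedAlgebra (R := ℂ) (n := Fin d) (α := ℂ)
  have := FiniteDimensional.complete ℂ (Matrix (Fin d) (Fin d) ℂ)
  have := FiniteDimensional.proper ℂ (Matrix (Fin d) (Fin d) ℂ)
  have hpsi : psiMat ψ = ofScalarsSum (E := Matrix (Fin d) (Fin d) ℂ) (taylorCoeff ψ) :=
    funext fun M => (ofScalars_sum_eq _ M).symm
  have hψc : Continuous (psiMat ψ (d := d)) :=
    hpsi ▸ continuous_ofScalarsSum_taylorCoeff fun z => (hψ z).differentiableAt
  have hL : Bornology.IsBounded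
      ((fun Ω => (τ * a 1 0) • (1 : Matrix (Fin d) (Fin d) ℂ) + (τ * a 0 1) • Ω) '' K) :=
    (hK.image (by fun_prop)).isBounded
  exact hψc.comp_tendstoUniformlyOn_of_isBounded hL (tendstoUniformlyOn_smul_phiSeries h00 hr
    hconv (tendsto_mul_of_norm_sub_div_le hδ hgb) hK.isBounded)

theorem stmt7 (d : ℕ) (a : ℕ → ℕ → ℂ) (h00 : a 0 0 = 0)
    (r : ℝ) (hr : 0 < r)
    (hconv : ∀ s t : ℝ, 0 ≤ s → 0 ≤ t → s + t < r →
      Summable (fun p : ℕ × ℕ => ‖a p.1 p.2‖ * s ^ p.1 * t ^ p.2))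
    (g : ℂ → ℂ) (δ C : ℝ) (hδ : 0 < δ) (hC : 0 < C)
    (τ : ℂ) (hτ : τ ≠ 0)
    (hg : ContinuousOn g (Metric.ball (0 : ℂ) δ \ {0}))
    (hgb : ∀ ε ∈ Metric.ball (0 : ℂ) δ \ {0}, ‖g ε - τ / ε‖ ≤ C)
    (ψ : ℂ → ℂ) (hψ : ∀ z : ℂ, AnalyticAt ℂ ψ z)
    (K : Set (Matrix (Fin d) (Fin d) ℂ)) (hK : IsCompact K) :
    TendstoUniformlyOn
      (fun (ε : ℂ) (Ω : Matrix (Fin d) (Fin d) ℂ) => psiMat ψ (g ε • Phi a d ε Ω))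
      (fun Ω : Matrix (Fin d) (Fin d) ℂ =>
        psiMat ψ ((τ * a 1 0) • (1 : Matrix (Fin d) (Fin d) ℂ) + (τ * a 0 1) • Ω))
      (𝓝[≠] (0 : ℂ)) K :=
  stmt7_general d a h00 r hr hconv g δ C hδ τ hgb ψ hψ K hK
end

section
/- Let Θ(ε) ∈ ℝ^{d×d} be as in the main theorem (Θ(ε) = B diag(arcsin((ε/r)ω_i√(1−ε²ω_i²/(4r²)))) B⁻¹ with Ω = B diag(ω_i) B⁻¹ real diagonalizable, all ω_i ≠ 0, r ∈ ℝ*). Suppose sin((b−a)Ω/(2r)) is invertible. Let n(ε) = ⌊(t−a)/(2ε)⌋ and M(ε) = (b−a)/ε with M(ε) even integer along a sequence ε → 0. Then cot((M(ε)/2)Θ(ε)) → cot((b−a)Ω/(2r)) and cosec((M(ε)/2)Θ(ε)) → cosec((b−a)Ω/(2r)) as ε → 0 (in matrix norm), where cot(X) = cos(X)(sin(X))⁻¹ and cosec(X) = (sin(X))⁻¹ whenever sin(X) is invertible. -/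
/-!
Both `Θ(ε)` and `Ω` are diagonalised by `B`, and on matrices `B * diagonal v * B⁻¹` the power
series `msinR` and `mcosR` act entrywise on `v`; in particular they are continuous in `v`.
With `M = 2m` and `ε = (b - a) / (2m)`, the `i`-th eigenvalue of `m • Θ(ε)` is
`m * arcsin ((c / m) * √(1 - (c / m) ^ 2 / 4))` with `c = (b - a) ω i / (2r)`, which tends to `c`
since `arcsin' 0 = 1`. Matrix inversion is continuous at the invertible limit
`msinR (((b - a) / (2 * r)) • Ω)`.
-/

open Matrix Filter Topology

/-- Matrix cosine of a real matrix, by power series. -/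
noncomputable def mcosR {d : ℕ} (M : Matrix (Fin d) (Fin d) ℝ) : Matrix (Fin d) (Fin d) ℝ :=
  ∑' n : ℕ, (((-1 : ℝ) ^ n / ((2 * n).factorial : ℝ))) • M ^ (2 * n)

/-- Matrix sine of a real matrix, by power series. -/
noncomputable def msinR {d : ℕ} (M : Matrix (Fin d) (Fin d) ℝ) : Matrix (Fin d) (Fin d) ℝ :=
  ∑' n : ℕ, (((-1 : ℝ) ^ n / ((2 * n + 1).factorial : ℝ))) • M ^ (2 * n + 1)

namespace Matrix

variable {n : Type*} [Fintype n] [DecidableEq n] (B : Matrix n n ℝ) (hB : IsUnit B.det)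

noncomputable def conjDiagonal : (n → ℝ) →ₐ[ℝ] Matrix n n ℝ :=
  (MulSemiringAction.toAlgEquiv ℝ _ (ConjAct.toConjAct (B.nonsingInvUnit hB))).toAlgHom.comp
    (diagonalAlgHom ℝ)

lemma conjDiagonal_apply (v : n → ℝ) :
    conjDiagonal B hB v = B * diagonal v * B⁻¹ :=
  rfl

lemma continuous_conjDiagonal : Continuous (conjDiagonal B hB) :=
  LinearMap.continuous_of_finiteDimensional (conjDiagonal B hB).toLinearMap

lemma tsum_smul_pow_conjDiagonal (v : n → ℝ)
    {g : ℕ → ℝ} {e : ℕ → ℕ} {s : ℝ → ℝ} (hs : ∀ x, HasSum (fun k => g k * x ^ e k) (s x)) :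
    ∑' k, g k • conjDiagonal B hB v ^ e k = conjDiagonal B hB (fun i => s (v i)) := by
  have h :=
    (Pi.hasSum.2 fun i => hs (v i)).map (conjDiagonal B hB) (continuous_conjDiagonal B hB)
  rw [← h.tsum_eq]
  congr 1
  funext k
  rw [← map_pow, ← map_smul]
  rfl

end Matrix

section

variable {d : ℕ} (B : Matrix (Fin d) (Fin d) ℝ) (hB : IsUnit B.det)

lemma msinR_conjDiagonal (v : Fin d → ℝ) :
    msinR (conjDiagonal B hB v) = conjDiagonal B hB (fun i => Real.sin (v i)) :=
  tsum_smul_pow_conjDiagonal B hB v fun x => by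
    simpa only [div_mul_eq_mul_div] using Real.hasSum_sin x

lemma mcosR_conjDiagonal (v : Fin d → ℝ) :
    mcosR (conjDiagonal B hB v) = conjDiagonal B hB (fun i => Real.cos (v i)) :=
  tsum_smul_pow_conjDiagonal B hB v fun x => by
    simpa only [div_mul_eq_mul_div] using Real.hasSum_cos x

lemma continuous_msinR_conjDiagonal : Continuous fun v => msinR (conjDiagonal B hB v) := by
  simp only [msinR_conjDiagonal]
  exact (continuous_conjDiagonal B hB).comp (by fun_prop)

lemma continuous_mcosR_conjDiagonal : Continuous fun v => mcosR (conjDiagonal B hB v) := by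
  simp only [mcosR_conjDiagonal]
  exact (continuous_conjDiagonal B hB).comp (by fun_prop)

end

/-- Write `f x = x * dslope f 0 x`; `dslope f 0` is continuous at `0` with value `f'`. -/
lemma Filter.Tendsto.mul_comp_of_hasDerivAt {α : Type*} {l : Filter α} {f : ℝ → ℝ} {f' L : ℝ}
    (hf : HasDerivAt f f' 0) (hf0 : f 0 = 0) {x y : α → ℝ} (hx : Tendsto x l (𝓝 0))
    (hyx : Tendsto (fun k => y k * x k) l (𝓝 L)) :
    Tendsto (fun k => y k * f (x k)) l (𝓝 (L * f')) := by
  have hslope : Tendsto (fun k => dslope f 0 (x k)) l (𝓝 f') := by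
    rw [← hf.deriv, ← dslope_same]
    exact ((continuousAt_dslope_same.2 hf.differentiableAt).tendsto.comp hx)
  refine (hyx.mul hslope).congr fun k => ?_
  have h := sub_smul_dslope f 0 (x k)
  rw [hf0, sub_zero, sub_zero, smul_eq_mul] at h
  rw [← h, mul_assoc]

lemma tendsto_natCast_mul_arcsin (c : ℝ) :
    Tendsto (fun m : ℕ => (m : ℝ) * Real.arcsin (c / m * √(1 - (c / m) ^ 2 / 4))) atTop
      (𝓝 c) := by
  have hcm : Tendsto (fun m : ℕ => c / (m : ℝ)) atTop (𝓝 0) :=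
    tendsto_const_div_atTop_nhds_zero_nat c
  have hsqrt : Tendsto (fun m : ℕ => √(1 - (c / m) ^ 2 / 4)) atTop (𝓝 1) := by
    have h := ((by fun_prop : Continuous fun t : ℝ => √(1 - t ^ 2 / 4)).tendsto 0).comp hcm
    simpa [Function.comp_def] using h
  have hderiv : HasDerivAt Real.arcsin 1 0 := by
    simpa using Real.hasDerivAt_arcsin (x := 0) (by norm_num) (by norm_num)
  have hx : Tendsto (fun m : ℕ => c / m * √(1 - (c / m) ^ 2 / 4)) atTop (𝓝 0) := by
    simpa using hcm.mul hsqrt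
  have hyx :
      Tendsto (fun m : ℕ => (m : ℝ) * (c / m * √(1 - (c / m) ^ 2 / 4))) atTop (𝓝 c) := by
    have h : Tendsto (fun m : ℕ => c * √(1 - (c / m) ^ 2 / 4)) atTop (𝓝 c) := by
      simpa using hsqrt.const_mul c
    refine h.congr' ?_
    filter_upwards [eventually_ne_atTop 0] with m hm
    field_simp
  simpa using Tendsto.mul_comp_of_hasDerivAt hderiv Real.arcsin_zero hx hyx

theorem stmt17_general (d : ℕ) (a b r : ℝ)
    (Ω B : Matrix (Fin d) (Fin d) ℝ) (ω : Fin d → ℝ)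
    (hB : IsUnit B.det) (hΩ : Ω = B * Matrix.diagonal ω * B⁻¹)
    (hsin : IsUnit (msinR (((b - a) / (2 * r)) • Ω)).det) :
    let Θ : ℝ → Matrix (Fin d) (Fin d) ℝ := fun ε =>
      B * Matrix.diagonal (fun i =>
        Real.arcsin ((ε / r) * ω i * Real.sqrt (1 - ε ^ 2 * (ω i) ^ 2 / (4 * r ^ 2)))) * B⁻¹
    Tendsto
        (fun m : ℕ =>
          mcosR ((m : ℝ) • Θ ((b - a) / (2 * (m : ℝ))))
            * (msinR ((m : ℝ) • Θ ((b - a) / (2 * (m : ℝ)))))⁻¹)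
        atTop
        (𝓝 (mcosR (((b - a) / (2 * r)) • Ω) * (msinR (((b - a) / (2 * r)) • Ω))⁻¹))
    ∧ Tendsto
        (fun m : ℕ => (msinR ((m : ℝ) • Θ ((b - a) / (2 * (m : ℝ)))))⁻¹)
        atTop
        (𝓝 ((msinR (((b - a) / (2 * r)) • Ω))⁻¹)) := by
  intro Θ
  set c : Fin d → ℝ := fun i => (b - a) / (2 * r) * ω i
  set u : ℕ → Fin d → ℝ := fun m i => m * Real.arcsin (c i / m * √(1 - (c i / m) ^ 2 / 4))
  have hΩc : ((b - a) / (2 * r)) • Ω = conjDiagonal B hB c := by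
    rw [hΩ, ← conjDiagonal_apply B hB, ← map_smul]
    rfl
  have hΘu : ∀ m : ℕ, (m : ℝ) • Θ ((b - a) / (2 * m)) = conjDiagonal B hB (u m) := by
    intro m
    change (m : ℝ) • conjDiagonal B hB _ = _
    rw [← map_smul]
    congr 1
    funext i
    simp only [u, c, Pi.smul_apply, smul_eq_mul]
    congr 3
    · ring
    · congr 2
      ring
  have hu : Tendsto u atTop (𝓝 c) := tendsto_pi_nhds.2 fun i => tendsto_natCast_mul_arcsin (c i)
  have hsinT : Tendsto (fun m : ℕ => msinR ((m : ℝ) • Θ ((b - a) / (2 * m)))) atTop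
      (𝓝 (msinR (((b - a) / (2 * r)) • Ω))) := by
    simpa only [hΘu, hΩc, Function.comp_def] using
      ((continuous_msinR_conjDiagonal B hB).tendsto c).comp hu
  have hcosT : Tendsto (fun m : ℕ => mcosR ((m : ℝ) • Θ ((b - a) / (2 * m)))) atTop
      (𝓝 (mcosR (((b - a) / (2 * r)) • Ω))) := by
    simpa only [hΘu, hΩc, Function.comp_def] using
      ((continuous_mcosR_conjDiagonal B hB).tendsto c).comp hu
  have hinv : ContinuousAt Inv.inv (msinR (((b - a) / (2 * r)) • Ω)) :=
    continuousAt_matrix_inv _ (by simpa using NormedRing.inverse_continuousAt hsin.unit)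
  have hinvT := hinv.tendsto.comp hsinT
  exact ⟨hcosT.mul hinvT, hinvT⟩

theorem stmt17 (d : ℕ) (a b r : ℝ) (hab : a < b) (hr : r ≠ 0)
    (Ω B : Matrix (Fin d) (Fin d) ℝ) (ω : Fin d → ℝ)
    (hB : IsUnit B.det) (hΩ : Ω = B * Matrix.diagonal ω * B⁻¹)
    (hω : ∀ i, ω i ≠ 0)
    (hsin : IsUnit (msinR (((b - a) / (2 * r)) • Ω)).det) :
    let Θ : ℝ → Matrix (Fin d) (Fin d) ℝ := fun ε =>
      B * Matrix.diagonal (fun i =>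
        Real.arcsin ((ε / r) * ω i * Real.sqrt (1 - ε ^ 2 * (ω i) ^ 2 / (4 * r ^ 2)))) * B⁻¹
    Tendsto
        (fun m : ℕ =>
          mcosR ((m : ℝ) • Θ ((b - a) / (2 * (m : ℝ))))
            * (msinR ((m : ℝ) • Θ ((b - a) / (2 * (m : ℝ)))))⁻¹)
        atTop
        (𝓝 (mcosR (((b - a) / (2 * r)) • Ω) * (msinR (((b - a) / (2 * r)) • Ω))⁻¹))
    ∧ Tendsto
        (fun m : ℕ => (msinR ((m : ℝ) • Θ ((b - a) / (2 * (m : ℝ)))))⁻¹)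
        atTop
        (𝓝 ((msinR (((b - a) / (2 * r)) • Ω))⁻¹)) :=
  stmt17_general d a b r Ω B ω hB hΩ hsin
end
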